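/- For any nonnegative integers n ≥ 1 and k, the identity S(n, k) · ∏_{i=1}^{n}(1 − 2^{−i}) = ∏_{i=k+1}^{n+k}(1 − 2^{−i}) holds, where S(ω,l) = Σ_{0 ≤ i₁ ≤ ⋯ ≤ i_l ≤ ω} 2^{-(i₁+⋯+i_l)}. -/

import Mathlib

/-!
Classifying a nondecreasing tuple by its last (largest) entry `j` gives
`S ω (l + 1) = ∑_{j ≤ ω} 2^{-j} S j l`, hence the Pascal-type recurrence
`S (n + 1) (k + 1) = S n (k + 1) + 2^{-(n+1)} S (n + 1) k`. With `q = 1/2`, the quotients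
`(q^{k+1}; q)_n / (q; q)_n` satisfy the same recurrence (the `q`-Pascal rule) and the same
boundary values, so a double induction on `k` and `n` gives the identity.
-/

/-- `S ω l` = sum over all nondecreasing tuples `0 ≤ i₁ ≤ ⋯ ≤ i_l ≤ ω`
of `2^{-(i₁+⋯+i_l)}`, with `S ω 0 = 1`. -/
noncomputable def S (ω l : ℕ) : ℝ := by
  classical
  exact ∑ f ∈ Finset.univ.filter (fun f : Fin l → Fin (ω + 1) => Monotone f),
    (1 / 2 : ℝ) ^ (∑ i, (f i : ℕ))

open Finset

lemma Fin.monotone_snoc_of_le {α : Type*} [Preorder α] {n : ℕ} {g : Fin n → α} {x : α}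
    (hg : Monotone g) (hx : ∀ i, g i ≤ x) : Monotone (Fin.snoc g x : Fin (n + 1) → α) := by
  intro a b hab
  induction b using Fin.lastCases with
  | last =>
    induction a using Fin.lastCases with
    | last => exact le_rfl
    | cast a => simpa using hx a
  | cast b =>
    induction a using Fin.lastCases with
    | last => exact absurd hab (Fin.castSucc_lt_last b).not_ge
    | cast a => simpa using hg (Fin.castSucc_le_castSucc_iff.mp hab)

lemma S_zero_right (ω : ℕ) : S ω 0 = 1 := by
  classical
  simp [S, Subsingleton.monotone]

lemma S_zero_left (l : ℕ) : S 0 l = 1 := by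
  classical
  simp [S, Subsingleton.monotone']

lemma sum_filter_monotone_last_eq (ω l : ℕ) (j : Fin (ω + 1)) :
    ∑ f ∈ univ.filter
        (fun f : Fin (l + 1) → Fin (ω + 1) => Monotone f ∧ f (Fin.last l) = j),
        (1 / 2 : ℝ) ^ (∑ i, (f i : ℕ)) = (1 / 2 : ℝ) ^ (j : ℕ) * S j l := by
  classical
  rw [S, mul_sum]
  symm
  refine sum_bij (fun g _ => Fin.snoc (fun i => Fin.castLE (by omega) (g i)) j) ?_ ?_ ?_ ?_
  · intro g hg
    simp only [mem_filter, mem_univ, true_and, Fin.snoc_last, and_true] at hg ⊢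
    refine Fin.monotone_snoc_of_le (fun a b hab => ?_) fun i => ?_
    · exact hg hab
    · exact Nat.lt_succ_iff.mp (g i).isLt
  · intro g₁ _ g₂ _ h
    funext i
    simpa [Fin.castLE_inj] using
      congrFun (Fin.snoc_left_injective (α := fun _ => Fin (ω + 1)) j h) i
  · intro f hf
    simp only [mem_filter, mem_univ, true_and] at hf ⊢
    obtain ⟨hmono, rfl⟩ := hf
    refine ⟨fun i => ⟨f i.castSucc, Nat.lt_succ_of_le (hmono (Fin.le_last _))⟩,
      fun a b hab => hmono (Fin.castSucc_le_castSucc_iff.mpr hab), ?_⟩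
    conv_rhs => rw [← Fin.snoc_init_self f]
    congr
  · intro g _
    simp [Fin.sum_univ_castSucc, pow_add, add_comm]

lemma S_succ (ω l : ℕ) :
    S ω (l + 1) = ∑ j ∈ range (ω + 1), (1 / 2 : ℝ) ^ j * S j l := by
  classical
  rw [← Fin.sum_univ_eq_sum_range (fun j => (1 / 2 : ℝ) ^ j * S j l), S,
    ← sum_fiberwise _ (fun f : Fin (l + 1) → Fin (ω + 1) => f (Fin.last l))]
  refine sum_congr rfl fun j _ => ?_
  rw [← sum_filter_monotone_last_eq, filter_filter]

lemma S_succ_succ (n k : ℕ) :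
    S (n + 1) (k + 1) = S n (k + 1) + (1 / 2 : ℝ) ^ (n + 1) * S (n + 1) k := by
  rw [S_succ, S_succ, sum_range_succ]

/-- `qPochhammer q k n` is the `q`-Pochhammer symbol `(q^{k+1}; q)_n`. -/
def qPochhammer {R : Type*} [CommRing R] (q : R) (k n : ℕ) : R :=
  ∏ i ∈ Icc (k + 1) (n + k), (1 - q ^ i)

section qPochhammer

variable {R : Type*} [CommRing R] (q : R)

@[simp]
lemma qPochhammer_zero_right (k : ℕ) : qPochhammer q k 0 = 1 := by
  simp [qPochhammer]

lemma qPochhammer_succ_right (k n : ℕ) :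
    qPochhammer q k (n + 1) = qPochhammer q k n * (1 - q ^ (n + k + 1)) := by
  rw [qPochhammer, add_right_comm, prod_Icc_succ_top (by omega), qPochhammer]

lemma qPochhammer_succ_right' (k n : ℕ) :
    qPochhammer q k (n + 1) = (1 - q ^ (k + 1)) * qPochhammer q (k + 1) n := by
  rw [qPochhammer, qPochhammer, ← mul_prod_Ioc_eq_prod_Icc (by omega),
    ← Icc_add_one_left_eq_Ioc, add_right_comm n, add_assoc n]

lemma qPochhammer_succ_succ (k n : ℕ) :
    qPochhammer q (k + 1) (n + 1) =
      qPochhammer q (k + 1) n * (1 - q ^ (n + 1)) + q ^ (n + 1) * qPochhammer q k (n + 1) := by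
  rw [qPochhammer_succ_right, qPochhammer_succ_right']
  ring

end qPochhammer

lemma S_mul_qPochhammer (n k : ℕ) :
    S n k * qPochhammer (1 / 2 : ℝ) 0 n = qPochhammer (1 / 2 : ℝ) k n := by
  induction k generalizing n with
  | zero => rw [S_zero_right, one_mul]
  | succ k ihk =>
    induction n with
    | zero => simp [S_zero_left]
    | succ n ihn =>
      rw [S_succ_succ, qPochhammer_succ_succ, ← ihn, ← ihk, qPochhammer_succ_right]
      ring

theorem stmt_10_general (n k : ℕ) :
    S n k * ∏ i ∈ Finset.Icc 1 n, (1 - (1 / 2 : ℝ) ^ i)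
      = ∏ i ∈ Finset.Icc (k + 1) (n + k), (1 - (1 / 2 : ℝ) ^ i) :=
  S_mul_qPochhammer n k

theorem stmt_10 (n k : ℕ) (hn : 1 ≤ n) :
    S n k * ∏ i ∈ Finset.Icc 1 n, (1 - (1 / 2 : ℝ) ^ i)
      = ∏ i ∈ Finset.Icc (k + 1) (n + k), (1 - (1 / 2 : ℝ) ^ i) :=
  stmt_10_general n k
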